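/- Let h ≤ H < Q be positive integers with Q ≪ x and H = o(x) as x → ∞, and let f, g' : ℕ → ℂ be essentially bounded. Then ∑_{1 ≤ a ≤ H} ∑_{H < q ≤ Q} g'(q) ∑_{x < n ≤ x+h, n ≡ a mod q} f(n) = ( ∑_{1 ≤ a ≤ H} ∑_{H < q ≤ Q, q | x−a} g'(q) ) · ∑_{x < n ≤ x+h} f(n) + O_ε(x^ε h²). -/

import Mathlib

open Finset Filter Asymptotics

/-- `f` is essentially bounded: for every `ε > 0`, `f n ≪_ε n^ε`. -/
def EssBdd (f : ℕ → ℂ) : Prop :=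
  ∀ ε : ℝ, 0 < ε → ∃ C : ℝ, ∀ n : ℕ, 1 ≤ n → ‖f n‖ ≤ C * (n : ℝ) ^ ε

/-! For `1 ≤ a ≤ H < q` the congruence `n ≡ a (mod q)`, summed over `a`, becomes `n % q ∈ [1, H]`,
and `q ∣ x - a`, summed over `a`, becomes `x % q ∈ [1, H]`. So the error term is
`∑_q g'(q) ∑_{x < n ≤ x + h} f(n) ([n % q ∈ [1, H]] - [x % q ∈ [1, H]])`. The two indicators can
only differ if the residue `m % q` enters or leaves the window `[1, H]` at some step `m → m + 1`
with `x ≤ m < x + h`, which forces `q ∣ m` or `q ∣ m - H`. Thus only the `≤ 2h · max d(m)` divisors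
of these `2h` numbers contribute, each by `≪ x^ε h`, and the divisor bound `d(m) ≪ m^ε` gives
`O(x^ε h²)`. -/

theorem exists_add_one_le_mul_pow {b : ℝ} (hb : 1 < b) :
    ∃ C : ℝ, 1 ≤ C ∧ ∀ k : ℕ, (k + 1 : ℝ) ≤ C * b ^ k := by
  refine ⟨max 1 (b - 1)⁻¹, le_max_left _ _, fun k => ?_⟩
  have hC : 1 ≤ max 1 (b - 1)⁻¹ * (b - 1) :=
    (inv_mul_cancel₀ (sub_pos.mpr hb).ne').symm.le.trans
      (mul_le_mul_of_nonneg_right (le_max_right _ _) (sub_pos.mpr hb).le)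
  have hBernoulli : 1 + k * (b - 1) ≤ b ^ k := by
    simpa using one_add_mul_le_pow (a := b - 1) (by linarith) k
  nlinarith [le_max_left 1 (b - 1)⁻¹, (k.cast_nonneg : (0 : ℝ) ≤ k)]

theorem add_one_le_pow_of_two_le {b : ℝ} (hb : 2 ≤ b) (k : ℕ) : (k + 1 : ℝ) ≤ b ^ k :=
  calc (k + 1 : ℝ) ≤ 2 ^ k := by exact_mod_cast Nat.lt_two_pow_self
    _ ≤ b ^ k := pow_le_pow_left₀ zero_le_two hb k

theorem prod_primeFactors_rpow_pow_factorization {n : ℕ} (hn : n ≠ 0) (δ : ℝ) :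
    ∏ p ∈ n.primeFactors, ((p : ℝ) ^ δ) ^ n.factorization p = (n : ℝ) ^ δ := by
  simp_rw [Real.rpow_pow_comm (Nat.cast_nonneg _)]
  rw [Real.finsetProd_rpow _ _ fun p _ => by positivity]
  exact_mod_cast
    congrArg (fun m : ℕ => (m : ℝ) ^ δ) (Nat.prod_primeFactors_pow_factorization hn).symm

theorem exists_card_divisors_le_mul_rpow {δ : ℝ} (hδ : 0 < δ) :
    ∃ C : ℝ, ∀ n : ℕ, n ≠ 0 → (#n.divisors : ℝ) ≤ C * (n : ℝ) ^ δ := by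
  obtain ⟨C, hC1, hC⟩ := exists_add_one_le_mul_pow (Real.one_lt_rpow one_lt_two hδ)
  -- only the primes `p < 2 ^ (1 / δ)` cost a factor `C`
  set N := ⌈(2 : ℝ) ^ δ⁻¹⌉₊
  refine ⟨C ^ N, fun n hn => ?_⟩
  have hsmall : #(n.primeFactors.filter fun p : ℕ => (p : ℝ) ^ δ < 2) ≤ N := by
    refine (card_le_card fun p hp => ?_).trans (card_range N).le
    rw [mem_filter] at hp
    have := Real.rpow_lt_rpow (by positivity) hp.2 (inv_pos.mpr hδ)
    rw [← Real.rpow_mul (Nat.cast_nonneg p), mul_inv_cancel₀ hδ.ne', Real.rpow_one] at this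
    exact mem_range.mpr (Nat.lt_ceil.mpr this)
  have hfactor : ∀ p ∈ n.primeFactors, (n.factorization p + 1 : ℝ) ≤
      (if (p : ℝ) ^ δ < 2 then C else 1) * ((p : ℝ) ^ δ) ^ n.factorization p := by
    intro p hp
    split_ifs with hp2
    · refine (hC _).trans (mul_le_mul_of_nonneg_left (pow_le_pow_left₀ (by positivity) ?_ _)
        (by linarith))
      exact Real.rpow_le_rpow zero_le_two
        (by exact_mod_cast (Nat.prime_of_mem_primeFactors hp).two_le) hδ.le
    · rw [one_mul]; exact add_one_le_pow_of_two_le (not_lt.mp hp2) _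
  calc (#n.divisors : ℝ) = ∏ p ∈ n.primeFactors, (n.factorization p + 1 : ℝ) := by
        rw [Nat.card_divisors hn]; push_cast; rfl
    _ ≤ ∏ p ∈ n.primeFactors,
          (if (p : ℝ) ^ δ < 2 then C else 1) * ((p : ℝ) ^ δ) ^ n.factorization p :=
        prod_le_prod (fun _ _ => by positivity) hfactor
    _ = C ^ #(n.primeFactors.filter fun p : ℕ => (p : ℝ) ^ δ < 2) * (n : ℝ) ^ δ := by
        rw [prod_mul_distrib, prod_primeFactors_rpow_pow_factorization hn, prod_ite, prod_const,
          prod_const_one, mul_one]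
    _ ≤ C ^ N * (n : ℝ) ^ δ := by gcongr

theorem essBdd_card_divisors : EssBdd fun n => (#n.divisors : ℂ) := fun δ hδ => by
  obtain ⟨C, hC⟩ := exists_card_divisors_le_mul_rpow hδ
  exact ⟨C, fun n hn => by simpa using hC n (by omega)⟩

theorem EssBdd.exists_norm_le_rpow {f : ℕ → ℂ} (hf : EssBdd f) {δ : ℝ} (hδ : 0 < δ) :
    ∃ C : ℝ, 0 ≤ C ∧ ∀ (N : ℝ) (n : ℕ), 1 ≤ n → (n : ℝ) ≤ N → ‖f n‖ ≤ C * N ^ δ := by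
  obtain ⟨C, hC⟩ := hf δ hδ
  have hC0 : 0 ≤ C := by simpa using (norm_nonneg _).trans (hC 1 le_rfl)
  exact ⟨C, hC0, fun N n hn hnN => (hC n hn).trans <|
    mul_le_mul_of_nonneg_left (Real.rpow_le_rpow (Nat.cast_nonneg n) hnN hδ.le) hC0⟩

theorem exists_mem_Ico_not_iff_succ (p : ℕ → Prop) {a b : ℕ} (hab : a ≤ b) (h : ¬(p a ↔ p b)) :
    ∃ m ∈ Ico a b, ¬(p m ↔ p (m + 1)) := by
  contrapose! h
  induction b, hab using Nat.le_induction with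
  | base => rfl
  | succ b hab ih =>
    exact (ih fun m hm => h m (Ico_subset_Ico_right b.le_succ hm)).trans
      (h b (mem_Ico.mpr ⟨hab, b.lt_succ_self⟩))

theorem dvd_or_dvd_sub_of_not_iff_succ {q H m : ℕ} (hHq : H < q)
    (h : ¬(m % q ∈ Icc 1 H ↔ (m + 1) % q ∈ Icc 1 H)) : q ∣ m ∨ q ∣ m - H := by
  have hsucc := Nat.add_mod_eq_ite (k := q) (m := m) (n := 1)
  have hres : m % q = 0 ∨ m % q = H := by
    have := Nat.mod_lt m (show 0 < q by omega)
    simp only [mem_Icc] at h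
    rcases Nat.lt_or_ge 1 q with h1 | h1
    · rw [Nat.mod_eq_of_lt h1] at hsucc
      split_ifs at hsucc <;> omega
    · omega
  rcases hres with h0 | hH
  · exact .inl (Nat.dvd_of_mod_eq_zero h0)
  · refine .inr ((Nat.modEq_iff_dvd' (hH ▸ Nat.mod_le m q)).mp ?_)
    rw [Nat.ModEq, Nat.mod_eq_of_lt hHq, hH]

theorem mem_biUnion_divisors_of_not_iff {q H X h n : ℕ} (hHq : H < q) (hHX : H < X)
    (hn : n ∈ Ioc X (X + h)) (hne : ¬(n % q ∈ Icc 1 H ↔ X % q ∈ Icc 1 H)) :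
    q ∈ (Ico X (X + h)).biUnion fun m => m.divisors ∪ (m - H).divisors := by
  rw [mem_Ioc] at hn
  obtain ⟨m, hm, hjump⟩ := exists_mem_Ico_not_iff_succ (fun k => k % q ∈ Icc 1 H) hn.1.le
    (fun h => hne h.symm)
  rw [mem_Ico] at hm
  refine mem_biUnion.mpr ⟨m, mem_Ico.mpr ⟨hm.1, by omega⟩, ?_⟩
  rcases dvd_or_dvd_sub_of_not_iff_succ hHq hjump with hdvd | hdvd
  · exact mem_union_left _ (Nat.mem_divisors.mpr ⟨hdvd, by omega⟩)
  · exact mem_union_right _ (Nat.mem_divisors.mpr ⟨hdvd, by omega⟩)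

theorem card_biUnion_divisors_le {H X h : ℕ} {D : ℝ} (hHX : H < X)
    (hD : ∀ m, m ≠ 0 → m < X + h → (#m.divisors : ℝ) ≤ D) :
    (#((Ico X (X + h)).biUnion fun m => m.divisors ∪ (m - H).divisors) : ℝ) ≤ h * (2 * D) := by
  calc (#((Ico X (X + h)).biUnion fun m => m.divisors ∪ (m - H).divisors) : ℝ)
      ≤ ∑ m ∈ Ico X (X + h), ((#m.divisors : ℝ) + #(m - H).divisors) := by
        refine (Nat.cast_le.mpr card_biUnion_le).trans ?_
        push_cast
        exact sum_le_sum fun m _ => by exact_mod_cast card_union_le _ _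
    _ ≤ #(Ico X (X + h)) • (2 * D) := sum_le_card_nsmul _ _ _ fun m hm => by
        rw [mem_Ico] at hm
        rw [two_mul]
        exact add_le_add (hD m (by omega) hm.2) (hD (m - H) (by omega) (by omega))
    _ = h * (2 * D) := by rw [Nat.card_Ico, add_tsub_cancel_left, nsmul_eq_mul]

theorem sum_Icc_sum_filter_mod_eq {M : Type*} [AddCommMonoid M] (s : Finset ℕ) (f : ℕ → M)
    {H q : ℕ} (hHq : H < q) :
    ∑ a ∈ Icc 1 H, ∑ n ∈ s with n % q = a % q, f n = ∑ n ∈ s with n % q ∈ Icc 1 H, f n := by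
  rw [← sum_fiberwise_eq_sum_filter]
  refine sum_congr rfl fun a ha => ?_
  rw [Nat.mod_eq_of_lt ((mem_Icc.mp ha).2.trans_lt hHq)]

theorem sum_Icc_sum_filter_dvd_sub {M : Type*} [AddCommMonoid M] (s : Finset ℕ) (g : ℕ → M)
    {H X : ℕ} (hHX : H ≤ X) (hs : ∀ q ∈ s, H < q) :
    ∑ a ∈ Icc 1 H, ∑ q ∈ s with q ∣ X - a, g q = ∑ q ∈ s with X % q ∈ Icc 1 H, g q := by
  rw [← sum_fiberwise_eq_sum_filter]
  refine sum_congr rfl fun a ha => sum_congr (filter_congr fun q hq => ?_) fun _ _ => rfl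
  have haq : a < q := (mem_Icc.mp ha).2.trans_lt (hs q hq)
  rw [← Nat.modEq_iff_dvd' ((mem_Icc.mp ha).2.trans hHX), Nat.ModEq, Nat.mod_eq_of_lt haq,
    eq_comm]

section Defect

variable {R : Type*}

def windowDefect [AddCommGroup R] (f : ℕ → R) (H X h q : ℕ) : R :=
  (∑ n ∈ Ioc X (X + h) with n % q ∈ Icc 1 H, f n) -
    if X % q ∈ Icc 1 H then ∑ n ∈ Ioc X (X + h), f n else 0

theorem windowDefect_eq_zero [AddCommGroup R] {f : ℕ → R} {H X h q : ℕ}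
    (hq : ∀ n ∈ Ioc X (X + h), (n % q ∈ Icc 1 H ↔ X % q ∈ Icc 1 H)) :
    windowDefect f H X h q = 0 := by
  rw [windowDefect, filter_congr hq, filter_const]
  split_ifs <;> simp

theorem norm_windowDefect_le [SeminormedAddCommGroup R] {f : ℕ → R} {H X h q : ℕ} {B : ℝ}
    (hB : 0 ≤ B) (hf : ∀ n ∈ Ioc X (X + h), ‖f n‖ ≤ B) :
    ‖windowDefect f H X h q‖ ≤ 2 * h * B := by
  have hsum : ∀ s ⊆ Ioc X (X + h), ‖∑ n ∈ s, f n‖ ≤ h * B := fun s hs => by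
    refine (norm_sum_le_of_le s fun n hn => hf n (hs hn)).trans_eq (sum_const _) |>.trans ?_
    rw [nsmul_eq_mul]
    gcongr
    simpa using card_le_card hs
  refine (norm_sub_le _ _).trans ?_
  rw [two_mul, add_mul]
  refine add_le_add (hsum _ (filter_subset _ _)) ?_
  split_ifs
  · exact hsum _ subset_rfl
  · rw [norm_zero]; positivity

theorem pinch_error_eq_sum_windowDefect [Ring R] (f g : ℕ → R) {H Q X h : ℕ} (hHX : H ≤ X) :
    (∑ a ∈ Icc 1 H, ∑ q ∈ Ioc H Q, g q * ∑ n ∈ (Ioc X (X + h)).filter (fun n => n % q = a % q), f n)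
      - (∑ a ∈ Icc 1 H, ∑ q ∈ (Ioc H Q).filter (fun q => q ∣ X - a), g q) *
          (∑ n ∈ Ioc X (X + h), f n)
      = ∑ q ∈ Ioc H Q, g q * windowDefect f H X h q := by
  have hfirst : ∀ q ∈ Ioc H Q, ∑ a ∈ Icc 1 H,
      g q * ∑ n ∈ (Ioc X (X + h)).filter (fun n => n % q = a % q), f n =
      g q * ∑ n ∈ Ioc X (X + h) with n % q ∈ Icc 1 H, f n := fun q hq => by
    rw [← mul_sum, sum_Icc_sum_filter_mod_eq _ _ (mem_Ioc.mp hq).1]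
  rw [sum_comm, sum_congr rfl hfirst,
    sum_Icc_sum_filter_dvd_sub _ _ hHX fun q hq => (mem_Ioc.mp hq).1, sum_filter, sum_mul,
    ← sum_sub_distrib]
  refine sum_congr rfl fun q _ => ?_
  rw [windowDefect, mul_sub]
  split_ifs <;> simp

theorem norm_sum_mul_windowDefect_le [SeminormedRing R] (f g : ℕ → R) {H Q X h : ℕ} {Bf Bg D : ℝ}
    (hHX : H < X) (hBf : 0 ≤ Bf) (hBg : 0 ≤ Bg)
    (hf : ∀ n ∈ Ioc X (X + h), ‖f n‖ ≤ Bf) (hg : ∀ q ∈ Ioc H Q, ‖g q‖ ≤ Bg)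
    (hD : ∀ m, m ≠ 0 → m < X + h → (#m.divisors : ℝ) ≤ D) :
    ‖∑ q ∈ Ioc H Q, g q * windowDefect f H X h q‖ ≤ h * (2 * D) * (Bg * (2 * h * Bf)) := by
  set B := (Ico X (X + h)).biUnion fun m => m.divisors ∪ (m - H).divisors
  have hB : ∀ q ∈ Ioc H Q, g q * windowDefect f H X h q ≠ 0 → q ∈ B := fun q hq hne => by
    by_contra hqB
    refine hne (mul_eq_zero_of_right _ (windowDefect_eq_zero fun n hn => ?_))
    by_contra hjump
    exact hqB (mem_biUnion_divisors_of_not_iff (mem_Ioc.mp hq).1 hHX hn hjump)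
  rw [← sum_filter_of_ne hB]
  calc ‖∑ q ∈ Ioc H Q with q ∈ B, g q * windowDefect f H X h q‖
      ≤ #{q ∈ Ioc H Q | q ∈ B} • (Bg * (2 * h * Bf)) :=
        (norm_sum_le_of_le _ fun q hq => (norm_mul_le _ _).trans <|
          mul_le_mul (hg q (mem_filter.mp hq).1) (norm_windowDefect_le hBf hf) (norm_nonneg _)
            hBg).trans_eq (sum_const _)
    _ ≤ #B * (Bg * (2 * h * Bf)) := by
        rw [nsmul_eq_mul]
        gcongr
        exact fun q hq => (mem_filter.mp hq).2
    _ ≤ h * (2 * D) * (Bg * (2 * h * Bf)) := by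
        gcongr
        exact card_biUnion_divisors_le hHX hD

end Defect

theorem pinch_lemma_second_divisor_form_general
    (h H Q x : ℕ → ℕ) (hx : ∀ i, 0 < x i)
    (hhH : ∀ i, h i ≤ H i)
    (hQx : (fun i => (Q i : ℝ)) =O[atTop] (fun i => (x i : ℝ)))
    (hHx : (fun i => (H i : ℝ)) =o[atTop] (fun i => (x i : ℝ)))
    (f g' : ℕ → ℂ) (hf : EssBdd f) (hg' : EssBdd g')
    (ε : ℝ) (hε : 0 < ε) :
    (fun i =>
        (∑ a ∈ Finset.Icc 1 (H i), ∑ q ∈ Finset.Ioc (H i) (Q i),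
            g' q * ∑ n ∈ (Finset.Ioc (x i) (x i + h i)).filter (fun n => n % q = a % q), f n)
          - (∑ a ∈ Finset.Icc 1 (H i),
                ∑ q ∈ (Finset.Ioc (H i) (Q i)).filter (fun q => q ∣ x i - a), g' q) *
              (∑ n ∈ Finset.Ioc (x i) (x i + h i), f n))
      =O[atTop] (fun i => (x i : ℝ) ^ ε * (h i : ℝ) ^ 2) := by
  have hδ : 0 < ε / 3 := by positivity
  obtain ⟨Cf, hCf0, hCf⟩ := hf.exists_norm_le_rpow hδ
  obtain ⟨Cg, hCg0, hCg⟩ := hg'.exists_norm_le_rpow hδ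
  obtain ⟨Cd, -, hCd⟩ := essBdd_card_divisors.exists_norm_le_rpow hδ
  obtain ⟨K, hK⟩ := hQx.bound
  set N : ℕ → ℝ := fun i => max K 2 * x i
  refine .of_bound (4 * Cd * Cg * Cf * max K 2 ^ ε) ?_
  filter_upwards [hK, hHx.def one_half_pos] with i hQi hHi
  simp only [Real.norm_natCast] at hQi hHi
  have hx1 : (1 : ℝ) ≤ x i := by exact_mod_cast hx i
  have hHxi : H i < x i := by exact_mod_cast (show (H i : ℝ) < x i by linarith)
  have hxhN : ((x i + h i : ℕ) : ℝ) ≤ N i := by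
    have : (h i : ℝ) ≤ x i := by exact_mod_cast (hhH i).trans hHxi.le
    push_cast
    nlinarith [le_max_right K 2]
  have hQN : (Q i : ℝ) ≤ N i :=
    hQi.trans (mul_le_mul_of_nonneg_right (le_max_left K 2) (Nat.cast_nonneg _))
  have hNε : N i ^ (ε / 3) * N i ^ (ε / 3) * N i ^ (ε / 3) = max K 2 ^ ε * x i ^ ε := by
    rw [← Real.rpow_add (by positivity), ← Real.rpow_add (by positivity),
      Real.mul_rpow (by positivity) (Nat.cast_nonneg _)]
    ring_nf
  rw [pinch_error_eq_sum_windowDefect _ _ hHxi.le, Real.norm_of_nonneg (by positivity)]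
  refine (norm_sum_mul_windowDefect_le f g' hHxi (by positivity) (by positivity)
    (fun n hn => hCf _ n (by grind) ((Nat.cast_le.mpr (mem_Ioc.mp hn).2).trans hxhN))
    (fun q hq => hCg _ q (by grind) ((Nat.cast_le.mpr (mem_Ioc.mp hq).2).trans hQN))
    (fun m hm hmX => by simpa using hCd _ m (by omega) ((Nat.cast_le.mpr hmX.le).trans hxhN))
    ).trans_eq ?_
  linear_combination (4 * Cd * Cg * Cf * (h i : ℝ) ^ 2) * hNε

/-- Reformulation (Remark 4) of the second formula of the Pinch Lemma:
the congruence `n ≡ a (mod q)` is pinched to `q ∣ x - a`. -/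
theorem pinch_lemma_second_divisor_form
    (h H Q x : ℕ → ℕ) (hh : ∀ i, 0 < h i) (hx : ∀ i, 0 < x i)
    (hhH : ∀ i, h i ≤ H i) (hHQ : ∀ i, H i < Q i)
    (hQx : (fun i => (Q i : ℝ)) =O[atTop] (fun i => (x i : ℝ)))
    (hHx : (fun i => (H i : ℝ)) =o[atTop] (fun i => (x i : ℝ)))
    (f g' : ℕ → ℂ) (hf : EssBdd f) (hg' : EssBdd g')
    (ε : ℝ) (hε : 0 < ε) :
    (fun i =>
        (∑ a ∈ Finset.Icc 1 (H i), ∑ q ∈ Finset.Ioc (H i) (Q i),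
            g' q * ∑ n ∈ (Finset.Ioc (x i) (x i + h i)).filter (fun n => n % q = a % q), f n)
          - (∑ a ∈ Finset.Icc 1 (H i),
                ∑ q ∈ (Finset.Ioc (H i) (Q i)).filter (fun q => q ∣ x i - a), g' q) *
              (∑ n ∈ Finset.Ioc (x i) (x i + h i), f n))
      =O[atTop] (fun i => (x i : ℝ) ^ ε * (h i : ℝ) ^ 2) :=
  pinch_lemma_second_divisor_form_general h H Q x hx hhH hQx hHx f g' hf hg' ε hε
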